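/- Let f(t) = exp(exp(t) − 1) − 1 in ℚ[[t]] (exponential generating function of Bell numbers, shifted). Then there is no nonzero polynomial P ∈ ℚ[t, X, Y] with P(t, f, f') = 0, where f' is the formal derivative of f. Equivalently, f is not differentially algebraic of order 1 over ℚ[t]. -/

import Mathlib

open PowerSeries

/-- Composition `f ∘ g` of formal power series (intended for `g` with zero constant
coefficient): the `n`-th coefficient is that of `∑_{k ≤ n} (coeff k f) · g^k`. -/
noncomputable def PowerSeries.comp {R : Type*} [CommRing R] (f g : PowerSeries R) :
    PowerSeries R :=
  PowerSeries.mk fun n =>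
    PowerSeries.coeff n
      (∑ k ∈ Finset.range (n + 1), PowerSeries.C (PowerSeries.coeff k f) * g ^ k)

open Finset


private lemma term_deriv {B : Type*} [CommRing B] (ε : B →+* ℚ⟦X⟧)
    (der : B → B) (hεD : ∀ b, d⁄dX ℚ (ε b) = ε (der b))
    (v : B) (w : ℚ⟦X⟧) (hDw : d⁄dX ℚ w = ε v * w) (b : B) (i : ℕ) :
    d⁄dX ℚ (ε b * w ^ i) = ε (der b + (i : B) * (v * b)) * w ^ i := by
  cases i with
  | zero => simp [hεD]
  | succ j =>
    rw [Derivation.leibniz, Derivation.leibniz_pow, hDw, hεD]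
    simp only [smul_eq_mul, map_add, map_mul, map_natCast, Nat.add_sub_cancel]
    push_cast
    ring

private lemma key_step {B : Type*} [CommRing B] [IsDomain B]
    (ε : B →+* ℚ⟦X⟧) (hε : Function.Injective ε)
    (der : B → B) (hεD : ∀ b, d⁄dX ℚ (ε b) = ε (der b))
    (v : B) (w : ℚ⟦X⟧) (hw : w ≠ 0)
    (hDw : d⁄dX ℚ w = ε v * w)
    (hno : ∀ (m : ℕ), m ≠ 0 → ∀ a b : B, a ≠ 0 → b ≠ 0 →
      a * der b - b * der a ≠ (m : B) * (v * (a * b))) :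
    ∀ (n : ℕ) (c : ℕ → B),
      (∑ i ∈ range (n + 1), ε (c i) * w ^ i) = 0 → ∀ i ≤ n, c i = 0 := by
  intro n
  induction n with
  | zero =>
    intro c h i hi
    obtain rfl : i = 0 := Nat.le_zero.mp hi
    exact hε (by simpa using h)
  | succ n IH =>
    intro c h
    have hder : (∑ i ∈ range (n + 2), ε (der (c i) + (i : B) * (v * c i)) * w ^ i) = 0 := by
      have h2 := congrArg (d⁄dX ℚ) h
      rw [map_sum, map_zero] at h2
      rw [Finset.sum_congr rfl fun i _ => (term_deriv ε der hεD v w hDw (c i) i).symm]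
      exact h2
    by_cases ha : c (n + 1) = 0
    · have h' : (∑ i ∈ range (n + 1), ε (c i) * w ^ i) = 0 := by
        rw [Finset.sum_range_succ, ha] at h; simpa using h
      intro i hi
      rcases Nat.eq_or_lt_of_le hi with rfl | hlt
      · exact ha
      · exact IH c h' i (Nat.lt_succ_iff.mp hlt)
    · exfalso
      set S : ℕ → B := fun i =>
        c (n+1) * (der (c i) + (i : B) * (v * c i))
          - (der (c (n+1)) + ((n+1 : ℕ) : B) * (v * c (n+1))) * c i with hSdef
      have hS : ∑ i ∈ range (n+2), ε (S i) * w ^ i = 0 := by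
        have hterm : ∀ i, ε (S i) * w ^ i
            = ε (c (n+1)) * (ε (der (c i) + (i : B) * (v * c i)) * w ^ i)
              - ε (der (c (n+1)) + ((n+1 : ℕ) : B) * (v * c (n+1))) * (ε (c i) * w ^ i) := by
          intro i; simp only [hSdef, map_sub, map_mul]; ring
        rw [Finset.sum_congr rfl fun i _ => hterm i, Finset.sum_sub_distrib,
          ← Finset.mul_sum, ← Finset.mul_sum, hder, h, mul_zero, mul_zero, sub_zero]
      have hStop : S (n+1) = 0 := by simp only [hSdef]; ring
      have hS' : ∑ i ∈ range (n+1), ε (S i) * w ^ i = 0 := by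
        rw [Finset.sum_range_succ, hStop] at hS; simpa using hS
      have hSzero := IH S hS'
      have hci : ∀ i ≤ n, c i = 0 := by
        intro i hi
        by_contra hne
        have hSi := hSzero i hi
        apply hno (n + 1 - i) (by omega) (c (n+1)) (c i) ha hne
        have hcast : ((n + 1 - i : ℕ) : B) = ((n+1 : ℕ) : B) - (i : B) := by
          rw [Nat.cast_sub (by omega : i ≤ n+1)]
        rw [hcast]
        simp only [hSdef] at hSi
        linear_combination hSi
      have hfin : ε (c (n+1)) * w ^ (n+1) = 0 := by
        rw [Finset.sum_range_succ] at h
        rw [Finset.sum_eq_zero (fun i hi => by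
          rw [hci i (Nat.lt_succ_iff.mp (Finset.mem_range.mp hi)), map_zero, zero_mul])] at h
        simpa using h
      rcases mul_eq_zero.mp hfin with h0 | h0
      · exact ha (hε (by simpa using h0))
      · exact pow_ne_zero _ hw h0

private lemma exp_ne_zero : exp ℚ ≠ 0 := fun h =>
  one_ne_zero (by rw [← PowerSeries.constantCoeff_exp (A := ℚ), h, map_zero])

private lemma derivative_exp_eq : d⁄dX ℚ (exp ℚ) = exp ℚ := by
  ext n
  rw [PowerSeries.coeff_derivative, PowerSeries.coeff_exp, PowerSeries.coeff_exp]
  have h : ((n+1).factorial : ℚ) = (n+1) * n.factorial := by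
    rw [Nat.factorial_succ]; push_cast; ring
  have h0 : (n.factorial : ℚ) ≠ 0 := Nat.cast_ne_zero.mpr n.factorial_ne_zero
  simp only [Algebra.algebraMap_self, RingHom.id_apply, h]
  field_simp

private lemma coeff_mul_derivative_top {R : Type*} [CommSemiring R] (a b : Polynomial R) :
    (a * Polynomial.derivative b).coeff (a.natDegree + b.natDegree) = 0 := by
  rcases eq_or_ne (Polynomial.derivative b) 0 with h | h
  · simp [h]
  · apply Polynomial.coeff_eq_zero_of_natDegree_lt
    have hb : 1 ≤ b.natDegree := by
      by_contra hb
      have hb0 : b.natDegree = 0 := by omega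
      obtain ⟨r, rfl⟩ := Polynomial.natDegree_eq_zero.mp hb0
      simp at h
    calc (a * Polynomial.derivative b).natDegree
        ≤ a.natDegree + (Polynomial.derivative b).natDegree := Polynomial.natDegree_mul_le
      _ ≤ a.natDegree + (b.natDegree - 1) := by
          gcongr; exact Polynomial.natDegree_derivative_le b
      _ < a.natDegree + b.natDegree := by omega

private lemma hno_poly1 (m : ℕ) (hm : m ≠ 0) (a b : Polynomial ℚ) (ha : a ≠ 0) (hb : b ≠ 0) :
    a * Polynomial.derivative b - b * Polynomial.derivative a
      ≠ (m : Polynomial ℚ) * ((1 : Polynomial ℚ) * (a * b)) := by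
  intro heq
  have h1 := congrArg (fun p => Polynomial.coeff p (a.natDegree + b.natDegree)) heq
  have h2 : (b * Polynomial.derivative a).coeff (a.natDegree + b.natDegree) = 0 := by
    rw [add_comm]; exact coeff_mul_derivative_top b a
  have h3 : ((m : Polynomial ℚ) * ((1:Polynomial ℚ) * (a * b))).coeff (a.natDegree + b.natDegree)
      = m * (a.leadingCoeff * b.leadingCoeff) := by
    rw [one_mul, ← Polynomial.C_eq_natCast, Polynomial.coeff_C_mul,
      Polynomial.coeff_mul_degree_add_degree]
  simp only [Polynomial.coeff_sub, coeff_mul_derivative_top, h2, h3, sub_zero] at h1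
  exact (mul_ne_zero (Nat.cast_ne_zero.mpr hm)
    (mul_ne_zero (Polynomial.leadingCoeff_ne_zero.mpr ha)
      (Polynomial.leadingCoeff_ne_zero.mpr hb))) h1.symm

noncomputable def eps1 : Polynomial ℚ →+* ℚ⟦X⟧ := Polynomial.coeToPowerSeries.ringHom

private lemma eps1_apply (p : Polynomial ℚ) : eps1 p = ↑p :=
  Polynomial.coeToPowerSeries.ringHom_apply

private lemma eps1_inj : Function.Injective eps1 := by
  intro x y h
  rw [eps1_apply, eps1_apply] at h
  exact Polynomial.coe_injective ℚ h

private lemma eps1_D (p : Polynomial ℚ) :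
    d⁄dX ℚ (eps1 p) = eps1 (Polynomial.derivative p) := by
  rw [eps1_apply, eps1_apply]; exact PowerSeries.derivative_coe p

private lemma level1 : ∀ (n : ℕ) (c : ℕ → Polynomial ℚ),
    (∑ i ∈ range (n + 1), eps1 (c i) * exp ℚ ^ i) = 0 → ∀ i ≤ n, c i = 0 :=
  key_step eps1 eps1_inj Polynomial.derivative eps1_D 1 (exp ℚ) exp_ne_zero
    (by rw [map_one, one_mul, derivative_exp_eq]) hno_poly1

noncomputable def eps2 : Polynomial (Polynomial ℚ) →+* ℚ⟦X⟧ :=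
  Polynomial.eval₂RingHom eps1 (exp ℚ)

private lemma eps2_apply (p : Polynomial (Polynomial ℚ)) :
    eps2 p = Polynomial.eval₂ eps1 (exp ℚ) p := rfl

private lemma eps2_zero (p : Polynomial (Polynomial ℚ)) (h : eps2 p = 0) : p = 0 := by
  have hs : ∑ i ∈ range (p.natDegree + 1), eps1 (p.coeff i) * exp ℚ ^ i = 0 := by
    rw [← Polynomial.eval₂_eq_sum_range, ← eps2_apply]
    exact h
  have hz := level1 p.natDegree _ hs
  refine Polynomial.ext fun i => ?_
  rcases le_or_gt i p.natDegree with hi | hi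
  · simpa using hz i hi
  · simp [Polynomial.coeff_eq_zero_of_natDegree_lt hi]

private lemma eps2_inj : Function.Injective eps2 :=
  (injective_iff_map_eq_zero eps2).mpr eps2_zero

noncomputable def d1 (p : Polynomial (Polynomial ℚ)) : Polynomial (Polynomial ℚ) :=
  ⟨.ofCoeff (p.toFinsupp.coeff.mapRange Polynomial.derivative (map_zero _))⟩

private lemma d1_coeff (p : Polynomial (Polynomial ℚ)) (k : ℕ) :
    (d1 p).coeff k = Polynomial.derivative (p.coeff k) := by
  rw [d1, Polynomial.coeff_ofFinsupp, AddMonoidAlgebra.coeff_ofCoeff, Finsupp.mapRange_apply, Polynomial.coeff]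

private lemma d1_add (p q : Polynomial (Polynomial ℚ)) : d1 (p + q) = d1 p + d1 q := by
  refine Polynomial.ext fun k => ?_
  simp [d1_coeff, Polynomial.coeff_add]

private lemma d1_monomial (n : ℕ) (c : Polynomial ℚ) :
    d1 (Polynomial.monomial n c) = Polynomial.monomial n (Polynomial.derivative c) := by
  refine Polynomial.ext fun k => ?_
  simp only [d1_coeff, Polynomial.coeff_monomial, apply_ite Polynomial.derivative, map_zero]

noncomputable def der2 (p : Polynomial (Polynomial ℚ)) : Polynomial (Polynomial ℚ) :=
  d1 p + Polynomial.X * Polynomial.derivative p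

private lemma der2_monomial (n : ℕ) (c : Polynomial ℚ) :
    der2 (Polynomial.monomial n c)
      = Polynomial.monomial n
          (Polynomial.derivative c + (n : Polynomial ℚ) * (1 * c)) := by
  rw [der2, d1_monomial, Polynomial.derivative_monomial]
  cases n with
  | zero => simp
  | succ k =>
    simp only [Nat.add_sub_cancel]
    rw [Polynomial.X_mul_monomial, ← map_add (Polynomial.monomial (k + 1))]
    congr 1
    push_cast
    ring

private lemma der2_add (p q : Polynomial (Polynomial ℚ)) :
    der2 (p + q) = der2 p + der2 q := by
  rw [der2, der2, der2, d1_add, Polynomial.derivative_add]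
  ring

private lemma eps2_D (p : Polynomial (Polynomial ℚ)) :
    d⁄dX ℚ (eps2 p) = eps2 (der2 p) := by
  induction p using Polynomial.induction_on' with
  | add p q hp hq =>
    rw [map_add, map_add, hp, hq, der2_add, map_add]
  | monomial n c =>
    rw [der2_monomial, eps2_apply, Polynomial.eval₂_monomial, eps2_apply,
      Polynomial.eval₂_monomial]
    exact term_deriv eps1 Polynomial.derivative eps1_D 1 (exp ℚ)
      (by rw [map_one, one_mul, derivative_exp_eq]) c n

private lemma hno_poly2 (m : ℕ) (hm : m ≠ 0) (a b : Polynomial (Polynomial ℚ))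
    (ha : a ≠ 0) (hb : b ≠ 0) :
    a * der2 b - b * der2 a
      ≠ (m : Polynomial (Polynomial ℚ)) * (Polynomial.X * (a * b)) := by
  intro heq
  have hd1 : ∀ p : Polynomial (Polynomial ℚ), (d1 p).natDegree ≤ p.natDegree := by
    intro p
    refine Polynomial.natDegree_le_iff_coeff_eq_zero.mpr fun k hk => ?_
    rw [d1_coeff, Polynomial.coeff_eq_zero_of_natDegree_lt hk, map_zero]
  have key : ∀ x y : Polynomial (Polynomial ℚ),
      (x * der2 y).coeff (x.natDegree + y.natDegree + 1) = 0 := by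
    intro x y
    rw [der2, mul_add, Polynomial.coeff_add]
    have h1 : (x * d1 y).coeff (x.natDegree + y.natDegree + 1) = 0 :=
      Polynomial.coeff_eq_zero_of_natDegree_lt
        (Nat.lt_succ_of_le (Polynomial.natDegree_mul_le.trans
          (Nat.add_le_add_left (hd1 y) x.natDegree)))
    have h2 : (x * (Polynomial.X * Polynomial.derivative y)).coeff
        (x.natDegree + y.natDegree + 1) = 0 := by
      rw [mul_left_comm, Polynomial.coeff_X_mul]
      exact coeff_mul_derivative_top x y
    rw [h1, h2, add_zero]
  have h1 := congrArg (fun p => Polynomial.coeff p (a.natDegree + b.natDegree + 1)) heq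
  have h2 : (b * der2 a).coeff (a.natDegree + b.natDegree + 1) = 0 := by
    rw [add_comm a.natDegree b.natDegree]; exact key b a
  have h3 : ((m : Polynomial (Polynomial ℚ)) * (Polynomial.X * (a * b))).coeff
      (a.natDegree + b.natDegree + 1)
      = (m : Polynomial ℚ) * (a.leadingCoeff * b.leadingCoeff) := by
    rw [← Polynomial.C_eq_natCast, Polynomial.coeff_C_mul, Polynomial.coeff_X_mul,
      Polynomial.coeff_mul_degree_add_degree]
  simp only [Polynomial.coeff_sub, key, h2, h3, sub_zero] at h1
  exact (mul_ne_zero (Nat.cast_ne_zero.mpr hm)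
    (mul_ne_zero (Polynomial.leadingCoeff_ne_zero.mpr ha)
      (Polynomial.leadingCoeff_ne_zero.mpr hb))) h1.symm


noncomputable def T (N : ℕ) : ℚ⟦X⟧ :=
  ∑ k ∈ range (N + 1), C (coeff k (exp ℚ)) * (exp ℚ - 1) ^ k

private lemma coeff_u (n : ℕ) :
    coeff n ((exp ℚ).comp (exp ℚ - 1)) = coeff n (T n) := by
  rw [PowerSeries.comp, coeff_mk, T]

private lemma coeff_g_pow {n k : ℕ} (h : n < k) : coeff n ((exp ℚ - 1) ^ k) = 0 := by
  have hg0 : constantCoeff (exp ℚ - 1) = 0 := by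
    rw [map_sub, constantCoeff_exp, map_one, sub_self]
  have hdvd : (X : ℚ⟦X⟧) ^ k ∣ (exp ℚ - 1) ^ k :=
    pow_dvd_pow_of_dvd (PowerSeries.X_dvd_iff.mpr hg0) k
  exact PowerSeries.X_pow_dvd_iff.mp hdvd n h

private lemma coeff_T {n N : ℕ} (h : n ≤ N) : coeff n (T N) = coeff n (T n) := by
  rw [T, T, map_sum, map_sum]
  refine (Finset.sum_subset (Finset.range_subset_range.mpr (by omega)) fun k hk hk' => ?_).symm
  rw [PowerSeries.coeff_C_mul, coeff_g_pow (by simp only [Finset.mem_range] at hk'; omega),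
    mul_zero]

private lemma coeff_T_u {n N : ℕ} (h : n ≤ N) :
    coeff n (T N) = coeff n ((exp ℚ).comp (exp ℚ - 1)) := by
  rw [coeff_T h, ← coeff_u]

private lemma u_const : constantCoeff ((exp ℚ).comp (exp ℚ - 1)) = 1 := by
  rw [← PowerSeries.coeff_zero_eq_constantCoeff_apply, coeff_u, T]
  simp [PowerSeries.coeff_exp]

private lemma u_ne_zero : (exp ℚ).comp (exp ℚ - 1) ≠ 0 := fun h =>
  one_ne_zero (by rw [← u_const, h, map_zero])

private lemma hDT (n : ℕ) : d⁄dX ℚ (T (n+1)) = exp ℚ * T n := by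
  have hg : d⁄dX ℚ (exp ℚ - 1) = exp ℚ := by
    rw [map_sub, Derivation.map_one_eq_zero, sub_zero, derivative_exp_eq]
  rw [T, map_sum, Finset.sum_range_succ']
  have h0 : d⁄dX ℚ (C (coeff 0 (exp ℚ)) * (exp ℚ - 1) ^ 0) = 0 := by
    simp
  rw [h0, add_zero, T, Finset.mul_sum]
  refine Finset.sum_congr rfl fun j _ => ?_
  rw [Derivation.leibniz, Derivation.leibniz_pow, hg, PowerSeries.derivative_C]
  have key : C (coeff j (exp ℚ))
      = ((j+1 : ℕ) : ℚ⟦X⟧) * C (coeff (j+1) (exp ℚ)) := by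
    have h1 : coeff j (exp ℚ) = coeff (j+1) (exp ℚ) * ((j:ℚ)+1) := by
      conv_lhs => rw [← derivative_exp_eq]
      rw [PowerSeries.coeff_derivative]
    rw [h1, map_mul, ← map_natCast C (j+1)]
    push_cast
    ring
  rw [key]
  simp only [smul_eq_mul, nsmul_eq_mul, smul_zero, add_zero, Nat.add_sub_cancel]
  push_cast
  ring

private lemma hDu : d⁄dX ℚ ((exp ℚ).comp (exp ℚ - 1))
    = exp ℚ * (exp ℚ).comp (exp ℚ - 1) := by
  ext n
  have h2 : coeff n (exp ℚ * T n) = coeff n (exp ℚ * (exp ℚ).comp (exp ℚ - 1)) := by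
    rw [PowerSeries.coeff_mul, PowerSeries.coeff_mul]
    refine Finset.sum_congr rfl fun p hp => ?_
    have hp2 : p.2 ≤ n := by
      have := Finset.HasAntidiagonal.mem_antidiagonal.mp hp; omega
    rw [coeff_T_u hp2]
  calc coeff n (d⁄dX ℚ ((exp ℚ).comp (exp ℚ - 1)))
      = coeff (n+1) ((exp ℚ).comp (exp ℚ - 1)) * ((n:ℚ)+1) := by
        rw [PowerSeries.coeff_derivative]
    _ = coeff (n+1) (T (n+1)) * ((n:ℚ)+1) := by rw [coeff_T_u (le_refl (n+1))]
    _ = coeff n (d⁄dX ℚ (T (n+1))) := by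
        rw [PowerSeries.coeff_derivative]
    _ = coeff n (exp ℚ * T n) := by rw [hDT]
    _ = _ := h2

private lemma level2 : ∀ (n : ℕ) (c : ℕ → Polynomial (Polynomial ℚ)),
    (∑ i ∈ range (n + 1), eps2 (c i) * ((exp ℚ).comp (exp ℚ - 1)) ^ i) = 0 →
      ∀ i ≤ n, c i = 0 :=
  key_step eps2 eps2_inj der2 eps2_D Polynomial.X ((exp ℚ).comp (exp ℚ - 1)) u_ne_zero
    (by rw [hDu]; congr 1; rw [eps2_apply, Polynomial.eval₂_X]) hno_poly2

noncomputable def eps3 : Polynomial (Polynomial (Polynomial ℚ)) →+* ℚ⟦X⟧ :=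
  Polynomial.eval₂RingHom eps2 ((exp ℚ).comp (exp ℚ - 1))

private lemma eps3_apply (p : Polynomial (Polynomial (Polynomial ℚ))) :
    eps3 p = Polynomial.eval₂ eps2 ((exp ℚ).comp (exp ℚ - 1)) p := rfl

private lemma eps3_zero (p : Polynomial (Polynomial (Polynomial ℚ))) (h : eps3 p = 0) :
    p = 0 := by
  have hs : ∑ i ∈ range (p.natDegree + 1),
      eps2 (p.coeff i) * ((exp ℚ).comp (exp ℚ - 1)) ^ i = 0 := by
    rw [← Polynomial.eval₂_eq_sum_range, ← eps3_apply]
    exact h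
  have hz := level2 p.natDegree _ hs
  refine Polynomial.ext fun i => ?_
  rcases le_or_gt i p.natDegree with hi | hi
  · simpa using hz i hi
  · simp [Polynomial.coeff_eq_zero_of_natDegree_lt hi]

noncomputable def Phi : MvPolynomial (Fin 3) ℚ →ₐ[ℚ] Polynomial (Polynomial (Polynomial ℚ)) :=
  MvPolynomial.aeval
    ![Polynomial.C (Polynomial.C Polynomial.X), Polynomial.C Polynomial.X,
      (Polynomial.X : Polynomial (Polynomial (Polynomial ℚ)))]

private lemma eps3_Phi (Q : MvPolynomial (Fin 3) ℚ) :
    eps3 (Phi Q)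
      = MvPolynomial.aeval ![(X : ℚ⟦X⟧), exp ℚ, (exp ℚ).comp (exp ℚ - 1)] Q := by
  have hhom : eps3.comp Phi.toRingHom
      = (MvPolynomial.aeval
          ![(X : ℚ⟦X⟧), exp ℚ, (exp ℚ).comp (exp ℚ - 1)]).toRingHom := by
    apply MvPolynomial.ringHom_ext
    · intro r
      simp only [RingHom.coe_comp, Function.comp_apply, AlgHom.toRingHom_eq_coe,
        RingHom.coe_coe, Phi, MvPolynomial.aeval_C, Polynomial.algebraMap_apply,
        Algebra.algebraMap_self, RingHom.id_apply]
      rw [eps3_apply, Polynomial.eval₂_C, eps2_apply, Polynomial.eval₂_C, eps1_apply,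
        Polynomial.coe_C, PowerSeries.algebraMap_apply, Algebra.algebraMap_self,
        RingHom.id_apply]
    · intro i
      fin_cases i <;>
        simp [Phi, eps3_apply, eps2_apply, eps1_apply, Polynomial.coe_X, Polynomial.coe_C]
  exact RingHom.congr_fun hhom Q

private lemma Phi_zero (Q : MvPolynomial (Fin 3) ℚ) (h : Phi Q = 0) : Q = 0 := by
  have hev : ∀ v : Fin 3 → ℚ, MvPolynomial.eval v Q = 0 := by
    intro v
    set ev3 : Polynomial (Polynomial (Polynomial ℚ)) →+* ℚ :=
      (Polynomial.evalRingHom (v 0)).comp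
        ((Polynomial.evalRingHom (Polynomial.C (v 1))).comp
          (Polynomial.evalRingHom (Polynomial.C (Polynomial.C (v 2))))) with hev3
    have hhom : ev3.comp Phi.toRingHom = MvPolynomial.eval v := by
      apply MvPolynomial.ringHom_ext
      · intro r
        rw [RingHom.comp_apply]
        rw [show Phi.toRingHom (MvPolynomial.C r) = Phi (MvPolynomial.C r) from rfl]
        rw [show (MvPolynomial.C r : MvPolynomial (Fin 3) ℚ)
            = algebraMap ℚ (MvPolynomial (Fin 3) ℚ) r from rfl, AlgHom.commutes]
        simp [hev3, Polynomial.algebraMap_apply]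
      · intro i
        fin_cases i <;> simp [hev3, Phi]
    have := RingHom.congr_fun hhom Q
    rw [← this, RingHom.comp_apply]
    rw [show Phi.toRingHom Q = Phi Q from rfl, h, map_zero]
  have : Q = 0 := by
    apply MvPolynomial.funext
    intro v
    rw [hev v, map_zero]
  exact this


private lemma aeval_eq_eval_q {σ : Type*} (f : σ → ℚ) (p : MvPolynomial σ ℚ) :
    MvPolynomial.aeval f p = MvPolynomial.eval f p := by
  rw [← MvPolynomial.coe_aeval_eq_eval]; rfl

private lemma eval_aeval3 (g : Fin 3 → MvPolynomial (Fin 3) ℚ) (w : Fin 3 → ℚ)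
    (P : MvPolynomial (Fin 3) ℚ) :
    MvPolynomial.eval w (MvPolynomial.aeval g P)
      = MvPolynomial.eval (fun i => MvPolynomial.eval w (g i)) P := by
  rw [← aeval_eq_eval_q w (MvPolynomial.aeval g P), MvPolynomial.comp_aeval_apply,
    ← aeval_eq_eval_q (fun i => MvPolynomial.eval w (g i)) P]
  simp only [aeval_eq_eval_q]

noncomputable def theta : MvPolynomial (Fin 3) ℚ →ₐ[ℚ] MvPolynomial (Fin 3) ℚ :=
  MvPolynomial.aeval
    ![MvPolynomial.X 0, MvPolynomial.X 2 - 1, MvPolynomial.X 1 * MvPolynomial.X 2]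

private lemma theta_zero (P : MvPolynomial (Fin 3) ℚ) (h : theta P = 0) : P = 0 := by
  have hev : ∀ w : Fin 3 → ℚ,
      MvPolynomial.eval w ((MvPolynomial.X 1 + 1) * P) = 0 := by
    intro w
    rw [map_mul]
    rcases eq_or_ne (w 1 + 1) 0 with hw | hw
    · have : MvPolynomial.eval w (MvPolynomial.X 1 + 1 : MvPolynomial (Fin 3) ℚ)
          = w 1 + 1 := by simp
      rw [this, hw, zero_mul]
    · have hP0 : MvPolynomial.eval w P = 0 := by
        set v : Fin 3 → ℚ := ![w 0, w 2 / (w 1 + 1), w 1 + 1] with hv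
        have h1 := eval_aeval3
          ![MvPolynomial.X 0, MvPolynomial.X 2 - 1, MvPolynomial.X 1 * MvPolynomial.X 2] v P
        have hcan : w 2 / (w 1 + 1) * (w 1 + 1) = w 2 := div_mul_cancel₀ _ hw
        have h2 : (fun i => MvPolynomial.eval v
            (![MvPolynomial.X 0, MvPolynomial.X 2 - 1,
              MvPolynomial.X 1 * MvPolynomial.X 2] i)) = w := by
          funext i
          fin_cases i <;> simp [hv, hcan]
        have h3 : MvPolynomial.eval v (theta P) = 0 := by rw [h, map_zero]
        rw [show theta P = MvPolynomial.aeval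
          ![MvPolynomial.X 0, MvPolynomial.X 2 - 1,
            MvPolynomial.X 1 * MvPolynomial.X 2] P from rfl, h1, h2] at h3
        exact h3
      rw [hP0, mul_zero]
  have hX1 : (MvPolynomial.X 1 + 1 : MvPolynomial (Fin 3) ℚ) ≠ 0 := by
    intro h0
    have := congrArg (MvPolynomial.eval (fun _ => (0:ℚ))) h0
    simp at this
  have hprod : (MvPolynomial.X 1 + 1) * P = 0 :=
    MvPolynomial.funext fun w => by rw [hev w, map_zero]
  rcases mul_eq_zero.mp hprod with h0 | h0
  · exact absurd h0 hX1
  · exact h0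

/-- For `f = exp(exp(t) - 1) - 1`, there is no nonzero polynomial `P ∈ ℚ[t, X, Y]` with
`P(t, f, f') = 0`: the Hilbert series of `Com ∘ Com` is not differentially algebraic of
order 1 over `ℚ[t]`. -/
theorem bell_series_not_order_one_diff_alg (f : PowerSeries ℚ)
    (hf : f = (exp ℚ).comp (exp ℚ - 1) - 1) :
    ∀ P : MvPolynomial (Fin 3) ℚ,
      MvPolynomial.aeval ![(X : PowerSeries ℚ), f, d⁄dX ℚ f] P = 0 → P = 0 := by
  intro P hP
  have hDf : d⁄dX ℚ f = exp ℚ * (exp ℚ).comp (exp ℚ - 1) := by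
    rw [hf, map_sub, Derivation.map_one_eq_zero, sub_zero, hDu]
  have hcomp : MvPolynomial.aeval
      ![(X : ℚ⟦X⟧), exp ℚ, (exp ℚ).comp (exp ℚ - 1)] (theta P)
      = MvPolynomial.aeval ![(X : ℚ⟦X⟧), f, d⁄dX ℚ f] P := by
    rw [show theta P = MvPolynomial.aeval
      ![MvPolynomial.X 0, MvPolynomial.X 2 - 1,
        MvPolynomial.X 1 * MvPolynomial.X 2] P from rfl,
      MvPolynomial.comp_aeval_apply]
    have hfun : (fun i => (MvPolynomial.aeval
        ![(X : ℚ⟦X⟧), exp ℚ, (exp ℚ).comp (exp ℚ - 1)])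
        (![(MvPolynomial.X 0 : MvPolynomial (Fin 3) ℚ), MvPolynomial.X 2 - 1,
          MvPolynomial.X 1 * MvPolynomial.X 2] i))
        = ![(X : ℚ⟦X⟧), f, d⁄dX ℚ f] := by
      funext i
      fin_cases i <;> simp [hf, hDf, hDu]
    rw [hfun]
  have h1 : eps3 (Phi (theta P)) = 0 := by rw [eps3_Phi, hcomp, hP]
  exact theta_zero P (Phi_zero (theta P) (eps3_zero (Phi (theta P)) h1))
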